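/- arXiv:math/0511643 — 5 statements merged into one kernel-verified Lean document; each statement's English description precedes it below -/
import Mathlib

section
/- In a left commutative rng R with fixed left identity 1ℓ, the operation x •_{1ℓ} y := xy + yx − (yx)·1ℓ makes (R, +, •_{1ℓ}) a commutative ring with identity 1ℓ. -/
universe u

/-- A left commutative rng: an associative rng with `x*y*z = y*x*z`, a fixed left
identity `e = 1ℓ`, whose additive halo `{x : x*e = 0}` is a commutative unital ring
under a local product `sharp` with local identity `ls = 1♯`, satisfying the local
strong Hu-Liu triassociative law. -/
structure LeftCommRng (R : Type u) [NonUnitalRing R] where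
  e : R
  sharp : R → R → R
  ls : R
  left_comm : ∀ x y z : R, x * y * z = y * x * z
  e_mul : ∀ x : R, e * x = x
  ls_halo : ls * e = 0
  sharp_halo : ∀ a b : R, a * e = 0 → b * e = 0 → sharp a b * e = 0
  sharp_assoc : ∀ a b c : R, a * e = 0 → b * e = 0 → c * e = 0 →
    sharp (sharp a b) c = sharp a (sharp b c)
  sharp_comm : ∀ a b : R, a * e = 0 → b * e = 0 → sharp a b = sharp b a
  sharp_add : ∀ a b c : R, a * e = 0 → b * e = 0 → c * e = 0 →
    sharp a (b + c) = sharp a b + sharp a c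
  sharp_ls : ∀ a : R, a * e = 0 → sharp ls a = a
  triassoc : ∀ (x a b : R), a * e = 0 → b * e = 0 →
    sharp (x * a) b = x * sharp a b

/-- The commutative product `x •_{1ℓ} y := xy + yx − (yx)·1ℓ`. -/
def LeftCommRng.bullet {R : Type u} [NonUnitalRing R] (L : LeftCommRng R) (x y : R) : R :=
  x * y + y * x - y * x * L.e

/-- A left commutative subrng `S` of the ambient left commutative rng. -/
structure IsLCSubrng {U : Type u} [NonUnitalRing U] (L : LeftCommRng U) (S : Set U) : Prop where
  e_mem : L.e ∈ S
  ls_mem : L.ls ∈ S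
  add_mem : ∀ {a b : U}, a ∈ S → b ∈ S → a + b ∈ S
  neg_mem : ∀ {a : U}, a ∈ S → -a ∈ S
  mul_mem : ∀ {a b : U}, a ∈ S → b ∈ S → a * b ∈ S
  sharp_mem : ∀ {a b : U}, a ∈ S → b ∈ S → a * L.e = 0 → b * L.e = 0 → L.sharp a b ∈ S

/-- An ideal `J` of the left commutative (sub)rng `S` (take `S = Set.univ` for an
ideal of the whole rng): an additive subgroup absorbing multiplication by `S` on
both sides, whose halo part is a `♯`-ideal. -/
structure IsLCIdealIn {U : Type u} [NonUnitalRing U] (L : LeftCommRng U) (S J : Set U) : Prop where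
  subset : J ⊆ S
  zero_mem : (0 : U) ∈ J
  add_mem : ∀ {a b : U}, a ∈ J → b ∈ J → a + b ∈ J
  neg_mem : ∀ {a : U}, a ∈ J → -a ∈ J
  mul_right : ∀ {a : U}, a ∈ J → ∀ r ∈ S, a * r ∈ J
  mul_left : ∀ {a : U}, a ∈ J → ∀ r ∈ S, r * a ∈ J
  sharp_mem : ∀ {a : U}, a ∈ J → a * L.e = 0 → ∀ b ∈ S, b * L.e = 0 → L.sharp a b ∈ J

/-- A Hu-Liu prime ideal `p` of the left commutative (sub)rng `S`. -/
structure IsHLPrimeIn {U : Type u} [NonUnitalRing U] (L : LeftCommRng U) (S p : Set U)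
    extends IsLCIdealIn L S p : Prop where
  ne_top : p ≠ S
  prime00 : ∀ x ∈ S, ∀ y ∈ S, x * L.e = x → y * L.e = y → x * y ∈ p → x ∈ p ∨ y ∈ p
  prime01 : ∀ x ∈ S, ∀ y ∈ S, x * L.e = x → y * L.e = 0 → x * y ∈ p → x ∈ p ∨ y ∈ p
  prime11 : ∀ x ∈ S, ∀ y ∈ S, x * L.e = 0 → y * L.e = 0 → L.sharp x y ∈ p → x ∈ p ∨ y ∈ p

/-- `pw e x n` is `xⁿ` (with the convention `pw e x 0 = e`, the left identity). -/
def pw {R : Type u} [NonUnitalRing R] (e x : R) : ℕ → R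
  | 0 => e
  | n + 1 => x * pw e x n

/-- `spow L u n` is the `n`-th `♯`-power `u^{♯n}` (with `spow L u 0 = 1♯`). -/
def LeftCommRng.spow {R : Type u} [NonUnitalRing R] (L : LeftCommRng R) (u : R) : ℕ → R
  | 0 => L.ls
  | n + 1 => L.sharp u (L.spow u n)

/-- `u` is integral over `R₀ = R·1ℓ` inside `(U₀, ·)`. -/
def Integral0 {U : Type u} [NonUnitalRing U] (L : LeftCommRng U) (R : Set U) (u : U) : Prop :=
  ∃ n : ℕ, 1 ≤ n ∧ ∃ a : ℕ → U, (∀ i, a i ∈ R ∧ a i * L.e = a i) ∧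
    pw L.e u n + ∑ i ∈ Finset.range n, a i * pw L.e u (n - 1 - i) = 0

/-- `u` is integral over `(R₁, ♯)` inside `(U₁, ♯)`. -/
def Integral1 {U : Type u} [NonUnitalRing U] (L : LeftCommRng U) (R : Set U) (u : U) : Prop :=
  ∃ n : ℕ, 1 ≤ n ∧ ∃ a : ℕ → U, (∀ i, a i ∈ R ∧ a i * L.e = 0) ∧
    L.spow u n + ∑ i ∈ Finset.range n, L.sharp (a i) (L.spow u (n - 1 - i)) = 0

/-- `U` is graded integral over the subrng `R`. -/
def GradedIntegral {U : Type u} [NonUnitalRing U] (L : LeftCommRng U) (R : Set U) : Prop :=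
  ∀ u : U, Integral0 L R (u * L.e) ∧ Integral1 L R (u - u * L.e)

/-! Commutativity of `•` is the identity `(y * x) * e = (x * y) * e`, an instance of left
commutativity. For associativity, both `(x • y) • z` and `x • (y • z)` expand into products of
three factors, some followed by `e`; the left commutativity `a * (b * c) = b * (a * c)` and
`e * a = a` bring both expansions to the same normal form. -/

namespace LeftCommRng

variable {R : Type u} [NonUnitalRing R]

theorem mul_left_comm (L : LeftCommRng R) (a b c : R) : a * (b * c) = b * (a * c) := by
  rw [← mul_assoc, ← mul_assoc, L.left_comm]

variable (L : LeftCommRng R)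

theorem mul_e_mul_e (x : R) : x * L.e * L.e = x * L.e := by
  rw [L.left_comm, L.e_mul]

theorem bullet_comm (x y : R) : L.bullet x y = L.bullet y x := by
  rw [bullet, bullet, L.left_comm y x L.e]
  abel

theorem bullet_assoc (x y z : R) :
    L.bullet (L.bullet x y) z = L.bullet x (L.bullet y z) := by
  simp only [bullet, mul_add, add_mul, mul_sub, sub_mul, mul_assoc, L.e_mul]
  rw [L.mul_left_comm z x y, L.mul_left_comm z y x, L.mul_left_comm z y (x * L.e),
    L.mul_left_comm z x (y * L.e)]
  abel

theorem bullet_add (x y z : R) : L.bullet x (y + z) = L.bullet x y + L.bullet x z := by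
  simp only [bullet, mul_add, add_mul]
  abel

theorem add_bullet (x y z : R) : L.bullet (x + y) z = L.bullet x z + L.bullet y z := by
  rw [L.bullet_comm, L.bullet_add, L.bullet_comm z, L.bullet_comm z]

theorem e_bullet (x : R) : L.bullet L.e x = x := by
  rw [bullet, L.e_mul, L.mul_e_mul_e]
  abel

theorem bullet_e (x : R) : L.bullet x L.e = x := by
  rw [L.bullet_comm, L.e_bullet]

end LeftCommRng

/-- `(R, +, •_{1ℓ})` is a commutative ring with identity `1ℓ`. -/
theorem bullet_commRing {R : Type u} [NonUnitalRing R] (L : LeftCommRng R) :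
    (∀ x y : R, L.bullet x y = L.bullet y x) ∧
    (∀ x y z : R, L.bullet (L.bullet x y) z = L.bullet x (L.bullet y z)) ∧
    (∀ x y z : R, L.bullet x (y + z) = L.bullet x y + L.bullet x z) ∧
    (∀ x y z : R, L.bullet (x + y) z = L.bullet x z + L.bullet y z) ∧
    (∀ x : R, L.bullet L.e x = x) ∧
    (∀ x : R, L.bullet x L.e = x) :=
  ⟨L.bullet_comm, L.bullet_assoc, L.bullet_add, L.add_bullet, L.e_bullet, L.bullet_e⟩
end

section
/- Let R be a left commutative rng with left identity 1ℓ. Then R₀ := R·1ℓ is closed under the product of R and, with the restricted operations, (R₀,+,·) is a commutative ring with identity 1ℓ. -/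
universe u

namespace LeftCommRng

variable {R : Type u} [NonUnitalRing R] (L : LeftCommRng R)

theorem mul_mul_e_comm (x y : R) : x * (y * L.e) = y * (x * L.e) := by
  simpa only [mul_assoc] using L.left_comm x y L.e

theorem mul_comm_of_mul_e_eq {x y : R} (hx : x * L.e = x) (hy : y * L.e = y) :
    x * y = y * x := by
  simpa only [hx, hy] using L.mul_mul_e_comm x y

theorem mul_mul_e_of_mul_e_eq (x : R) {y : R} (hy : y * L.e = y) :
    x * y * L.e = x * y := by
  rw [mul_assoc, hy]

end LeftCommRng

/-- `R₀ = R·1ℓ = {x : x·1ℓ = x}` is closed under the product, and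
`(R₀, +, ·)` is a commutative ring with identity `1ℓ`. -/
theorem zero_part_commRing {R : Type u} [NonUnitalRing R] (L : LeftCommRng R) :
    L.e * L.e = L.e ∧
    (∀ x y : R, x * L.e = x → y * L.e = y → (x * y) * L.e = x * y) ∧
    (∀ x y : R, x * L.e = x → y * L.e = y → x * y = y * x) ∧
    (∀ x y z : R, x * L.e = x → y * L.e = y → z * L.e = z → x * y * z = x * (y * z)) ∧
    (∀ x : R, x * L.e = x → L.e * x = x ∧ x * L.e = x) :=
  ⟨L.e_mul L.e,
    fun x _ _ hy => L.mul_mul_e_of_mul_e_eq x hy,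
    fun _ _ hx hy => L.mul_comm_of_mul_e_eq hx hy,
    fun x y z _ _ _ => mul_assoc x y z,
    fun x hx => ⟨L.e_mul x, hx⟩⟩
end

section
/- Let R be a left commutative rng with left identity 1ℓ. Then R has no two-sided identity; equivalently, the additive halo ℏ⁺(R) = {x : x·1ℓ = 0} is nonzero (since by definition ℏ⁺(R) is a ring with a nonzero identity 1♯, one has 1♯ ≠ 0 and 1♯·1ℓ = 0, so 1ℓ is not a right identity). -/
universe u

namespace LeftCommRng

variable {R : Type u} [NonUnitalRing R] (L : LeftCommRng R)

theorem exists_ne_zero_mul_e_eq_zero (hls : L.ls ≠ 0) : ∃ x : R, x ≠ 0 ∧ x * L.e = 0 :=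
  ⟨L.ls, hls, L.ls_halo⟩

theorem exists_mul_e_ne_self (hls : L.ls ≠ 0) : ∃ x : R, x * L.e ≠ x :=
  ⟨L.ls, by rw [L.ls_halo]; exact hls.symm⟩

theorem eq_e_of_forall_mul_eq_self {u : R} (hu : ∀ x : R, x * u = x) : u = L.e :=
  (L.e_mul u).symm.trans (hu L.e)

theorem not_exists_right_identity (hls : L.ls ≠ 0) : ¬ ∃ u : R, ∀ x : R, x * u = x := by
  rintro ⟨u, hu⟩
  obtain ⟨x, hx⟩ := L.exists_mul_e_ne_self hls
  exact hx (L.eq_e_of_forall_mul_eq_self hu ▸ hu x)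

end LeftCommRng

/-- since the local identity `1♯` is nonzero, the halo is nonzero,
`1ℓ` is not a right identity, and `R` has no two-sided identity. -/
theorem no_two_sided_identity {R : Type u} [NonUnitalRing R] (L : LeftCommRng R)
    (hls : L.ls ≠ 0) :
    (∃ x : R, x ≠ 0 ∧ x * L.e = 0) ∧
    (∃ x : R, x * L.e ≠ x) ∧
    ¬ ∃ u : R, ∀ x : R, u * x = x ∧ x * u = x :=
  ⟨L.exists_ne_zero_mul_e_eq_zero hls, L.exists_mul_e_ne_self hls,
    fun ⟨u, hu⟩ => L.not_exists_right_identity hls ⟨u, fun x => (hu x).2⟩⟩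
end

section
/- Let R be a left commutative rng with left identity 1ℓ, R₀ = R·1ℓ, R₁ = ℏ⁺(R). Then R₀·R₁ ⊆ R₁, R₁·R ⊆ R₁, and R₀·R₀ ⊆ R₀; i.e., the decomposition R = R₀ ⊕ R₁ behaves as follows: for x₀ ∈ R₀ and y₁ ∈ R₁ we have (x₀y₁)·1ℓ = 0, and for x₀, y₀ ∈ R₀ we have (x₀y₀)·1ℓ = x₀y₀. -/
universe u

/-- `R₀·R₁ ⊆ R₁`, `R₁·R ⊆ R₁` and `R₀·R₀ ⊆ R₀`. -/
theorem grading_multiplication {R : Type u} [NonUnitalRing R] (L : LeftCommRng R) :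
    (∀ x y : R, x * L.e = x → y * L.e = 0 → (x * y) * L.e = 0) ∧
    (∀ x y : R, x * L.e = 0 → (x * y) * L.e = 0) ∧
    (∀ x y : R, x * L.e = x → y * L.e = y → (x * y) * L.e = x * y) := by
  refine ⟨fun x y _ hy => ?_, fun x y hx => ?_, fun x y _ hy => ?_⟩
  · rw [mul_assoc, hy, mul_zero]
  · rw [L.left_comm, mul_assoc, hx, mul_zero]
  · rw [mul_assoc, hy]
end

section
/- (Lying-Over Theorem for left commutative rngs) Let R be a left commutative subrng of a left commutative rng U such that U is graded integral over R. Then for every Hu-Liu prime ideal p of R there exists a Hu-Liu prime ideal q of U with q ∩ R = p. -/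
/-!
Every `u ∈ U` splits as `u = u₀ + u₁` with `u₀ = u·1ℓ ∈ U₀` and `u₁ ∈ U₁`; here `(U₀, ·)` and
`(U₁, ♯)` are commutative rings, linked by the ring map `φ x = x·1♯`, and products decompose as
`(uv)₀ = u₀v₀`, `(uv)₁ = φ(u₀) ♯ v₁`. Hence for a prime `Q₀` of `U₀` and an ideal `Q₁ ⊇ φ(Q₀)` of
`U₁`, the set `{u | u₀ ∈ Q₀, u₁ ∈ Q₁}` is a Hu-Liu prime of `U` as soon as either `Q₁ = U₁`, or
`Q₁` is prime and `Q₀ = φ⁻¹(Q₁)`.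

Graded integrality makes `U₀ ⊇ R₀` and `U₁ ⊇ R₁` integral extensions of commutative rings, so
classical lying-over applies to each. If `1♯ ∈ p`, then `p ⊇ R₁`: lift the prime `p₀` of `R₀` to
`Q₀` and take `Q₁ = U₁`. If `1♯ ∉ p`, then `p₁` is a prime of `R₁`: lift it to `Q₁` and take
`Q₀ = φ⁻¹(Q₁)`, which lies over `p₀` because `r₀ ∈ p ↔ r₀·1♯ ∈ p` by the mixed primality of `p`.
-/

universe u

namespace LeftCommRng

variable {U : Type u} [NonUnitalRing U] (L : LeftCommRng U)

lemma e_mul_e : L.e * L.e = L.e := L.e_mul L.e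

lemma mul_e_mul_e_s10 (u : U) : u * L.e * L.e = u * L.e := by
  rw [mul_assoc, e_mul_e]

lemma sub_mul_e_mul_e (u : U) : (u - u * L.e) * L.e = 0 := by
  rw [sub_mul, mul_e_mul_e_s10, sub_self]

lemma mul_eq_zero_of_mul_e_eq_zero {a : U} (ha : a * L.e = 0) (v : U) : a * v = 0 := by
  rw [← L.e_mul v, ← mul_assoc, ha, zero_mul]

lemma mul_e_mul (u v : U) : u * L.e * v = u * v := by
  have h := L.mul_eq_zero_of_mul_e_eq_zero (L.sub_mul_e_mul_e u) v
  rwa [sub_mul, sub_eq_zero, eq_comm] at h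

lemma sharp_zero {a : U} (ha : a * L.e = 0) : L.sharp a 0 = 0 := by
  simpa using L.sharp_add a 0 0 ha (zero_mul _) (zero_mul _)

def U₀ : AddSubgroup U where
  carrier := {x | x * L.e = x}
  add_mem' {a b} ha hb := show (a + b) * L.e = a + b by rw [add_mul, ha, hb]
  zero_mem' := zero_mul _
  neg_mem' {a} ha := show -a * L.e = -a by rw [neg_mul, ha]

def U₁ : AddSubgroup U where
  carrier := {x | x * L.e = 0}
  add_mem' {a b} ha hb := show (a + b) * L.e = 0 by rw [add_mul, ha, hb, add_zero]
  zero_mem' := zero_mul _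
  neg_mem' {a} ha := show -a * L.e = 0 by rw [neg_mul, ha, neg_zero]

variable {L}

lemma mem_U₀ {x : U} : x ∈ L.U₀ ↔ x * L.e = x := Iff.rfl

lemma mem_U₁ {x : U} : x ∈ L.U₁ ↔ x * L.e = 0 := Iff.rfl

instance : CommRing L.U₀ where
  __ := (inferInstance : AddCommGroup L.U₀)
  mul a b := ⟨a * b, by rw [mem_U₀, mul_assoc, b.2]⟩
  one := ⟨L.e, L.e_mul_e⟩
  left_distrib a b c := Subtype.ext (mul_add a.1 b.1 c.1)
  right_distrib a b c := Subtype.ext (add_mul a.1 b.1 c.1)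
  zero_mul a := Subtype.ext (zero_mul a.1)
  mul_zero a := Subtype.ext (mul_zero a.1)
  mul_assoc a b c := Subtype.ext (mul_assoc a.1 b.1 c.1)
  one_mul a := Subtype.ext (L.e_mul a.1)
  mul_one a := Subtype.ext a.2
  mul_comm a b := Subtype.ext <| calc
    a.1 * b.1 = a.1 * b.1 * L.e := by rw [mul_assoc, b.2]
    _ = b.1 * a.1 * L.e := L.left_comm _ _ _
    _ = b.1 * a.1 := by rw [mul_assoc, a.2]

instance : CommRing L.U₁ where
  __ := (inferInstance : AddCommGroup L.U₁)
  mul a b := ⟨L.sharp a b, L.sharp_halo a b a.2 b.2⟩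
  one := ⟨L.ls, L.ls_halo⟩
  left_distrib a b c := Subtype.ext (L.sharp_add a b c a.2 b.2 c.2)
  right_distrib a b c := Subtype.ext (by
    change L.sharp (a.1 + b.1) c = L.sharp a c + L.sharp b c
    rw [L.sharp_comm _ _ (L.U₁.add_mem a.2 b.2) c.2, L.sharp_add _ _ _ c.2 a.2 b.2,
      L.sharp_comm _ _ c.2 a.2, L.sharp_comm _ _ c.2 b.2])
  zero_mul a := Subtype.ext (by
    change L.sharp 0 a = 0
    rw [L.sharp_comm _ _ (zero_mul _) a.2, L.sharp_zero a.2])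
  mul_zero a := Subtype.ext (L.sharp_zero a.2)
  mul_assoc a b c := Subtype.ext (L.sharp_assoc a b c a.2 b.2 c.2)
  one_mul a := Subtype.ext (L.sharp_ls a a.2)
  mul_one a := Subtype.ext (by
    change L.sharp a L.ls = a
    rw [L.sharp_comm _ _ a.2 L.ls_halo, L.sharp_ls a a.2])
  mul_comm a b := Subtype.ext (L.sharp_comm a b a.2 b.2)

@[simp] lemma coe_mul₀ (a b : L.U₀) : ((a * b : L.U₀) : U) = a * b := rfl
@[simp] lemma coe_mul₁ (a b : L.U₁) : ((a * b : L.U₁) : U) = L.sharp a b := rfl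

lemma coe_pow₀ (x : L.U₀) (n : ℕ) : ((x ^ n : L.U₀) : U) = pw L.e x n := by
  induction n with
  | zero => rfl
  | succ n ih => rw [pow_succ', coe_mul₀, ih, pw]

lemma coe_pow₁ (x : L.U₁) (n : ℕ) : ((x ^ n : L.U₁) : U) = L.spow x n := by
  induction n with
  | zero => rfl
  | succ n ih => rw [pow_succ', coe_mul₁, ih, spow]

variable (L)

def proj₀ : U →+ L.U₀ := (AddMonoidHom.mulRight L.e).codRestrict L.U₀ L.mul_e_mul_e_s10

def proj₁ : U →+ L.U₁ :=
  (AddMonoidHom.id U - AddMonoidHom.mulRight L.e).codRestrict L.U₁ L.sub_mul_e_mul_e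

def mulLs : L.U₀ →+* L.U₁ where
  toFun x := ⟨x * L.ls, by rw [mem_U₁, mul_assoc, L.ls_halo, mul_zero]⟩
  map_one' := Subtype.ext (L.e_mul L.ls)
  map_mul' x y := Subtype.ext <| by
    have hy : (y * L.ls : U) * L.e = 0 := by rw [mul_assoc, L.ls_halo, mul_zero]
    change (x * y : U) * L.ls = L.sharp (x * L.ls) (y * L.ls)
    rw [L.triassoc _ _ _ L.ls_halo hy, L.sharp_ls _ hy, mul_assoc]
  map_zero' := Subtype.ext (zero_mul L.ls)
  map_add' x y := Subtype.ext (add_mul (x : U) y L.ls)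

variable {L}

@[simp] lemma coe_proj₀ (u : U) : (L.proj₀ u : U) = u * L.e := rfl
@[simp] lemma coe_proj₁ (u : U) : (L.proj₁ u : U) = u - u * L.e := rfl
@[simp] lemma coe_mulLs (x : L.U₀) : (L.mulLs x : U) = x * L.ls := rfl

lemma proj₀_e : L.proj₀ L.e = 1 := Subtype.ext L.e_mul_e

lemma proj₀_of_mem_U₁ {a : U} (ha : a ∈ L.U₁) : L.proj₀ a = 0 := Subtype.ext ha

lemma proj₁_of_mem_U₀ {x : U} (hx : x ∈ L.U₀) : L.proj₁ x = 0 :=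
  Subtype.ext (sub_eq_zero.mpr hx.symm)

lemma proj₁_of_mem_U₁ {a : U} (ha : a ∈ L.U₁) : L.proj₁ a = ⟨a, ha⟩ :=
  Subtype.ext (by rw [coe_proj₁, ha, sub_zero])

lemma proj₀_mul (u v : U) : L.proj₀ (u * v) = L.proj₀ u * L.proj₀ v :=
  Subtype.ext (by simp only [coe_mul₀, coe_proj₀, mul_assoc, L.e_mul])

lemma proj₁_mul (u v : U) : L.proj₁ (u * v) = L.mulLs (L.proj₀ u) * L.proj₁ v :=
  Subtype.ext <| by
    have hv := L.sub_mul_e_mul_e v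
    rw [coe_mul₁, coe_mulLs, coe_proj₀, coe_proj₁, coe_proj₁, L.triassoc _ _ _ L.ls_halo hv,
      L.sharp_ls _ hv, mul_e_mul, mul_sub, mul_assoc]

lemma proj₁_sharp {a b : U} (ha : a ∈ L.U₁) (hb : b ∈ L.U₁) :
    L.proj₁ (L.sharp a b) = L.proj₁ a * L.proj₁ b := by
  rw [proj₁_of_mem_U₁ ha, proj₁_of_mem_U₁ hb, proj₁_of_mem_U₁ (L.sharp_halo a b ha hb)]
  rfl

variable {Q₀ : Ideal L.U₀} {Q₁ : Ideal L.U₁}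

variable (L) in
def ofParts (Q₀ : Ideal L.U₀) (Q₁ : Ideal L.U₁) : AddSubgroup U :=
  Q₀.toAddSubgroup.comap L.proj₀ ⊓ Q₁.toAddSubgroup.comap L.proj₁

lemma mem_ofParts {u : U} : u ∈ L.ofParts Q₀ Q₁ ↔ L.proj₀ u ∈ Q₀ ∧ L.proj₁ u ∈ Q₁ := Iff.rfl

lemma mem_ofParts_of_mem_U₀ {x : U} (hx : x ∈ L.U₀) : x ∈ L.ofParts Q₀ Q₁ ↔ L.proj₀ x ∈ Q₀ := by
  rw [mem_ofParts, proj₁_of_mem_U₀ hx, and_iff_left Q₁.zero_mem]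

lemma mem_ofParts_of_mem_U₁ {a : U} (ha : a ∈ L.U₁) : a ∈ L.ofParts Q₀ Q₁ ↔ L.proj₁ a ∈ Q₁ := by
  rw [mem_ofParts, proj₀_of_mem_U₁ ha, and_iff_right Q₀.zero_mem]

lemma isLCIdealIn_ofParts (hQ : Q₀ ≤ Q₁.comap L.mulLs) :
    IsLCIdealIn L Set.univ (L.ofParts Q₀ Q₁ : Set U) where
  subset := Set.subset_univ _
  zero_mem := zero_mem _
  add_mem := add_mem
  neg_mem := neg_mem
  mul_right {a} ha r _ := by
    rw [SetLike.mem_coe, mem_ofParts, proj₀_mul, proj₁_mul]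
    exact ⟨Q₀.mul_mem_right _ ha.1, Q₁.mul_mem_right _ (hQ ha.1)⟩
  mul_left {a} ha r _ := by
    rw [SetLike.mem_coe, mem_ofParts, proj₀_mul, proj₁_mul]
    exact ⟨Q₀.mul_mem_left _ ha.1, Q₁.mul_mem_left _ ha.2⟩
  sharp_mem {a} ha ha₁ b _ hb₁ := by
    rw [SetLike.mem_coe, mem_ofParts_of_mem_U₁ (L.sharp_halo a b ha₁ hb₁), proj₁_sharp ha₁ hb₁]
    exact Q₁.mul_mem_right _ ha.2

theorem isHLPrimeIn_ofParts [Q₀.IsPrime] (hQ : Q₀ ≤ Q₁.comap L.mulLs)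
    (h01 : ∀ x y, L.mulLs x * y ∈ Q₁ → x ∈ Q₀ ∨ y ∈ Q₁)
    (h11 : ∀ x y : L.U₁, x * y ∈ Q₁ → x ∈ Q₁ ∨ y ∈ Q₁) :
    IsHLPrimeIn L Set.univ (L.ofParts Q₀ Q₁ : Set U) where
  toIsLCIdealIn := isLCIdealIn_ofParts hQ
  ne_top h := by
    have he : L.e ∈ (L.ofParts Q₀ Q₁ : Set U) := h ▸ Set.mem_univ L.e
    exact Q₀.one_notMem (proj₀_e (L := L) ▸ he.1)
  prime00 x _ y _ hx hy hxy := by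
    simp only [SetLike.mem_coe, mem_ofParts_of_mem_U₀ hx, mem_ofParts_of_mem_U₀ hy]
    exact Ideal.IsPrime.mem_or_mem ‹_› (proj₀_mul x y ▸ hxy.1)
  prime01 x _ y _ hx hy hxy := by
    simp only [SetLike.mem_coe, mem_ofParts_of_mem_U₀ hx, mem_ofParts_of_mem_U₁ hy]
    exact h01 _ _ (proj₁_mul x y ▸ hxy.2)
  prime11 x _ y _ hx hy hxy := by
    simp only [SetLike.mem_coe, mem_ofParts_of_mem_U₁ hx, mem_ofParts_of_mem_U₁ hy]
    exact h11 _ _ (proj₁_sharp hx hy ▸ hxy.2)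

variable {R p : Set U}

theorem ofParts_inter_eq (hR : IsLCSubrng L R) (hp : IsLCIdealIn L R p)
    (h₀ : ∀ r ∈ R, L.proj₀ r ∈ Q₀ ↔ r * L.e ∈ p)
    (h₁ : ∀ r ∈ R, L.proj₁ r ∈ Q₁ ↔ r - r * L.e ∈ p) :
    (L.ofParts Q₀ Q₁ : Set U) ∩ R = p := by
  have mem_iff_parts {r : U} : r ∈ p ↔ r * L.e ∈ p ∧ r - r * L.e ∈ p := by
    refine ⟨fun hr => ?_, fun ⟨hr₀, hr₁⟩ => sub_add_cancel r (r * L.e) ▸ hp.add_mem hr₁ hr₀⟩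
    have hr₀ := hp.mul_right hr L.e hR.e_mem
    exact ⟨hr₀, sub_eq_add_neg r (r * L.e) ▸ hp.add_mem hr (hp.neg_mem hr₀)⟩
  ext r
  constructor
  · rintro ⟨⟨hr₀, hr₁⟩, hr⟩
    exact mem_iff_parts.mpr ⟨(h₀ r hr).mp hr₀, (h₁ r hr).mp hr₁⟩
  · intro hr
    have hrR := hp.subset hr
    exact ⟨⟨(h₀ r hrR).mpr (mem_iff_parts.mp hr).1, (h₁ r hrR).mpr (mem_iff_parts.mp hr).2⟩, hrR⟩

end LeftCommRng

theorem isIntegral_of_pow_add_sum_eq_zero {S A : Type*} [CommRing S] [CommRing A] [Algebra S A]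
    {x : A} {n : ℕ} (hn : 1 ≤ n) (a : ℕ → S)
    (h : x ^ n + ∑ i ∈ Finset.range n, algebraMap S A (a i) * x ^ (n - 1 - i) = 0) :
    IsIntegral S x := by
  open Polynomial in
  refine ⟨X ^ n + ∑ i ∈ Finset.range n, C (a i) * X ^ (n - 1 - i), monic_X_pow_add ?_, ?_⟩
  · refine (degree_sum_le _ _).trans_lt ((Finset.sup_lt_iff (WithBot.bot_lt_coe n)).mpr ?_)
    intro i _
    exact (degree_C_mul_X_pow_le _ _).trans_lt
      (WithBot.coe_lt_coe.mpr (show n - 1 - i < n by omega))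
  · simpa [eval₂_finsetSum] using h

theorem Subring.exists_isPrime_forall_mem_iff {A : Type*} [CommRing A] (S : Subring A)
    [Algebra.IsIntegral S A] (P : Ideal S) [P.IsPrime] :
    ∃ Q : Ideal A, Q.IsPrime ∧ ∀ x : S, (x : A) ∈ Q ↔ x ∈ P := by
  obtain ⟨⟨Q, hQ, hQP⟩⟩ := Ideal.nonempty_primesOver P (S := A)
  exact ⟨Q, hQ, fun x => (Ideal.mem_of_liesOver Q P x).symm⟩

open LeftCommRng

variable {U : Type u} [NonUnitalRing U] {L : LeftCommRng U} {R p : Set U}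

namespace IsLCSubrng

variable (hR : IsLCSubrng L R)
include hR

lemma zero_mem : (0 : U) ∈ R := add_neg_cancel L.e ▸ hR.add_mem hR.e_mem (hR.neg_mem hR.e_mem)

lemma sub_mul_e_mem {r : U} (hr : r ∈ R) : r - r * L.e ∈ R :=
  sub_eq_add_neg r (r * L.e) ▸ hR.add_mem hr (hR.neg_mem (hR.mul_mem hr hR.e_mem))

/-- The paper's `R₀ = R·1ℓ`, which is `R ∩ U₀` because `1ℓ ∈ R`. -/
def subring₀ : Subring L.U₀ where
  carrier := {x | (x : U) ∈ R}
  one_mem' := hR.e_mem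
  mul_mem' ha hb := hR.mul_mem ha hb
  add_mem' ha hb := hR.add_mem ha hb
  zero_mem' := hR.zero_mem
  neg_mem' ha := hR.neg_mem ha

def subring₁ : Subring L.U₁ where
  carrier := {x | (x : U) ∈ R}
  one_mem' := hR.ls_mem
  mul_mem' {a b} ha hb := hR.sharp_mem ha hb a.2 b.2
  add_mem' ha hb := hR.add_mem ha hb
  zero_mem' := hR.zero_mem
  neg_mem' ha := hR.neg_mem ha

theorem isIntegral₀ (hint : GradedIntegral L R) : Algebra.IsIntegral hR.subring₀ L.U₀ := by
  refine ⟨fun x => ?_⟩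
  have hx := (hint x).1
  rw [show (x : U) * L.e = x from x.2] at hx
  obtain ⟨n, hn, a, ha, h⟩ := hx
  refine isIntegral_of_pow_add_sum_eq_zero hn (fun i => ⟨⟨a i, (ha i).2⟩, (ha i).1⟩)
    (Subtype.ext ?_)
  simpa [coe_pow₀, Algebra.algebraMap_ofSubsemiring_apply] using h

theorem isIntegral₁ (hint : GradedIntegral L R) : Algebra.IsIntegral hR.subring₁ L.U₁ := by
  refine ⟨fun x => ?_⟩
  have hx := (hint x).2
  rw [show (x : U) * L.e = 0 from x.2, sub_zero] at hx
  obtain ⟨n, hn, a, ha, h⟩ := hx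
  refine isIntegral_of_pow_add_sum_eq_zero hn (fun i => ⟨⟨a i, (ha i).2⟩, (ha i).1⟩)
    (Subtype.ext ?_)
  simpa [coe_pow₁, Algebra.algebraMap_ofSubsemiring_apply] using h

end IsLCSubrng

namespace IsLCIdealIn

variable (hp : IsLCIdealIn L R p) (hR : IsLCSubrng L R)

def ideal₀ : Ideal hR.subring₀ where
  carrier := {z | ((z : L.U₀) : U) ∈ p}
  add_mem' ha hb := hp.add_mem ha hb
  zero_mem' := hp.zero_mem
  smul_mem' c _ hz := hp.mul_left hz _ c.2

def ideal₁ : Ideal hR.subring₁ where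
  carrier := {z | ((z : L.U₁) : U) ∈ p}
  add_mem' ha hb := hp.add_mem ha hb
  zero_mem' := hp.zero_mem
  smul_mem' c z hz := by
    change L.sharp _ _ ∈ p
    rw [L.sharp_comm _ _ c.1.2 z.1.2]
    exact hp.sharp_mem hz z.1.2 _ c.2 c.1.2

include hp in
lemma mem_of_ls_mem (hls : L.ls ∈ p) {a : U} (ha : a ∈ R) (ha₁ : a * L.e = 0) : a ∈ p :=
  L.sharp_ls a ha₁ ▸ hp.sharp_mem hls L.ls_halo a ha ha₁

end IsLCIdealIn

namespace IsHLPrimeIn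

variable (hp : IsHLPrimeIn L R p) (hR : IsLCSubrng L R)
include hp

lemma e_notMem : L.e ∉ p := fun he =>
  hp.ne_top <| hp.subset.antisymm fun r hr => L.e_mul r ▸ hp.mul_right he r hr

lemma ideal₀_isPrime : (hp.ideal₀ hR).IsPrime :=
  (Ideal.isPrime_iff).mpr ⟨fun h => hp.e_notMem (h ▸ Submodule.mem_top : (1 : hR.subring₀) ∈ _),
    fun {x y} => hp.prime00 _ x.2 _ y.2 x.1.2 y.1.2⟩

lemma ideal₁_isPrime (hls : L.ls ∉ p) : (hp.ideal₁ hR).IsPrime :=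
  (Ideal.isPrime_iff).mpr ⟨fun h => hls (h ▸ Submodule.mem_top : (1 : hR.subring₁) ∈ _),
    fun {x y} => hp.prime11 _ x.2 _ y.2 x.1.2 y.1.2⟩

include hR in
lemma mul_ls_mem_iff (hls : L.ls ∉ p) {x : U} (hx : x ∈ R) (hx₀ : x * L.e = x) :
    x * L.ls ∈ p ↔ x ∈ p :=
  ⟨fun h => (hp.prime01 x hx _ hR.ls_mem hx₀ L.ls_halo h).resolve_right hls,
    fun h => hp.mul_right h _ hR.ls_mem⟩

include hR in
theorem exists_lyingOver_of_ls_mem (hint : GradedIntegral L R) (hls : L.ls ∈ p) :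
    ∃ q : Set U, IsHLPrimeIn L Set.univ q ∧ q ∩ R = p := by
  have := hR.isIntegral₀ hint
  have := hp.ideal₀_isPrime hR
  obtain ⟨Q, hQ, hQp⟩ := hR.subring₀.exists_isPrime_forall_mem_iff (hp.ideal₀ hR)
  refine ⟨L.ofParts Q ⊤, isHLPrimeIn_ofParts (fun _ _ => Submodule.mem_top)
    (fun _ _ _ => Or.inr Submodule.mem_top) (fun _ _ _ => Or.inl Submodule.mem_top),
    ofParts_inter_eq hR hp.toIsLCIdealIn (fun r hr => hQp ⟨L.proj₀ r, hR.mul_mem hr hR.e_mem⟩)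
    fun r hr => iff_of_true Submodule.mem_top
      (hp.mem_of_ls_mem hls (hR.sub_mul_e_mem hr) (L.sub_mul_e_mul_e r))⟩

include hR in
theorem exists_lyingOver_of_ls_notMem (hint : GradedIntegral L R) (hls : L.ls ∉ p) :
    ∃ q : Set U, IsHLPrimeIn L Set.univ q ∧ q ∩ R = p := by
  have := hR.isIntegral₁ hint
  have := hp.ideal₁_isPrime hR hls
  obtain ⟨Q, hQ, hQp⟩ := hR.subring₁.exists_isPrime_forall_mem_iff (hp.ideal₁ hR)
  refine ⟨L.ofParts (Q.comap L.mulLs) Q, isHLPrimeIn_ofParts le_rfl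
    (fun _ _ h => hQ.mem_or_mem h) (fun _ _ h => hQ.mem_or_mem h),
    ofParts_inter_eq hR hp.toIsLCIdealIn (fun r hr => ?_)
    fun r hr => hQp ⟨L.proj₁ r, hR.sub_mul_e_mem hr⟩⟩
  have hr₀ : r * L.e ∈ R := hR.mul_mem hr hR.e_mem
  exact (hQp ⟨L.mulLs (L.proj₀ r), hR.mul_mem hr₀ hR.ls_mem⟩).trans
    (hp.mul_ls_mem_iff hR hls hr₀ (L.mul_e_mul_e_s10 r))

end IsHLPrimeIn

/-- Lying-Over Theorem for left commutative rngs: if `U` is graded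
integral over the left commutative subrng `R`, then every Hu-Liu prime ideal `p` of `R`
is lain over by some Hu-Liu prime ideal `q` of `U`: `q ∩ R = p`. -/
theorem lying_over {U : Type u} [NonUnitalRing U] (L : LeftCommRng U)
    (R : Set U) (hR : IsLCSubrng L R) (hint : GradedIntegral L R)
    (p : Set U) (hp : IsHLPrimeIn L R p) :
    ∃ q : Set U, IsHLPrimeIn L Set.univ q ∧ q ∩ R = p := by
  by_cases hls : L.ls ∈ p
  · exact hp.exists_lyingOver_of_ls_mem hR hint hls
  · exact hp.exists_lyingOver_of_ls_notMem hR hint hls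
end
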